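/- There exist a finite DAG G, a memory budget r₀ ∈ ℤ⁺ divisible by 4, and g ∈ ℤ⁺ such that in the fair comparison the optimal MPP cost is non-monotonic in the number of processors: OPT^(2) (2 processors, memory r₀/2 each) < OPT^(1) (1 processor, memory r₀) and OPT^(2) (2 processors, memory r₀/2 each) < OPT^(4) (4 processors, memory r₀/4 each). -/

import Mathlib

open scoped Classical

/-- A relation is a DAG edge relation if its transitive closure is irreflexive
(i.e., the directed graph is acyclic). -/
def IsDag {V : Type*} (E : V → V → Prop) : Prop := Irreflexive (Relation.TransGen E)

namespace MPP

variable {V : Type*} [DecidableEq V] {k : ℕ}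

/-- A configuration of multiprocessor red-blue pebbling: a set of red pebbles
for each of the `k` processors, and a set of blue pebbles. -/
structure Conf (V : Type*) (k : ℕ) where
  red : Fin k → Finset V
  blue : Finset V

/-- Moves of multiprocessor red-blue pebbling. `save`/`load` are the parallel I/O
moves (R1-M)/(R2-M), `compute` is (R3-M), and the removals are (R4-M). -/
inductive Move (V : Type*) (k : ℕ) where
  | save (m : ℕ) (f : Fin m → Fin k) (v : Fin m → V)
  | load (m : ℕ) (f : Fin m → Fin k) (v : Fin m → V)
  | compute (m : ℕ) (f : Fin m → Fin k) (v : Fin m → V)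
  | removeRed (j : Fin k) (x : V)
  | removeBlue (x : V)

/-- Add, for each `i`, the node `v i` to the red pebbles of processor `f i`. -/
def addRed (C : Conf V k) {m : ℕ} (f : Fin m → Fin k) (v : Fin m → V) :
    Fin k → Finset V :=
  fun j => C.red j ∪ (Finset.univ.filter (fun i => f i = j)).image v

/-- The effect of a move on a configuration. -/
def apply : Move V k → Conf V k → Conf V k
  | .save _ _ v, C => ⟨C.red, C.blue ∪ Finset.univ.image v⟩
  | .load _ f v, C => ⟨addRed C f v, C.blue⟩
  | .compute _ f v, C => ⟨addRed C f v, C.blue⟩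
  | .removeRed j x, C => ⟨Function.update C.red j (C.red j \ {x}), C.blue⟩
  | .removeBlue x, C => ⟨C.red, C.blue \ {x}⟩

/-- When a move may legally be performed in a given configuration. -/
def Legal (E : V → V → Prop) : Conf V k → Move V k → Prop
  | C, .save m f v => m ≤ k ∧ Function.Injective f ∧ ∀ i, v i ∈ C.red (f i)
  | C, .load m f v => m ≤ k ∧ Function.Injective f ∧ ∀ i, v i ∈ C.blue
  | C, .compute m f v =>
      m ≤ k ∧ Function.Injective f ∧ ∀ i, ∀ u, E u (v i) → u ∈ C.red (f i)
  | _, .removeRed _ _ => True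
  | _, .removeBlue _ => True

/-- A configuration respects the fast-memory bound `r` for every processor. -/
def Valid (r : ℕ) (C : Conf V k) : Prop := ∀ j, (C.red j).card ≤ r

/-- `Run E r C ms C'` : starting from configuration `C`, the list of moves `ms`
may be legally executed (respecting the memory bound `r` throughout) and leads
to configuration `C'`. -/
inductive Run (E : V → V → Prop) (r : ℕ) : Conf V k → List (Move V k) → Conf V k → Prop
  | nil (C : Conf V k) : Run E r C [] C
  | cons {C C'' : Conf V k} {mv : Move V k} {ms : List (Move V k)} :
      Legal E C mv → Valid r (apply mv C) → Run E r (apply mv C) ms C'' →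
      Run E r C (mv :: ms) C''

/-- Cost of a single move: `g` for I/O, `1` for compute, `0` for removal. -/
def moveCost (g : ℕ) : Move V k → ℕ
  | .save .. => g
  | .load .. => g
  | .compute .. => 1
  | .removeRed .. => 0
  | .removeBlue .. => 0

/-- Total cost of a sequence of moves. -/
def cost (g : ℕ) (ms : List (Move V k)) : ℕ := (ms.map (moveCost g)).sum

def isIO : Move V k → Bool
  | .save .. => true
  | .load .. => true
  | _ => false

/-- The number of I/O moves in a sequence of moves. -/
def ioCount (ms : List (Move V k)) : ℕ := (ms.filter isIO).length

def isCompute : Move V k → Bool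
  | .compute .. => true
  | _ => false

/-- The number of compute moves in a sequence of moves. -/
def computeCount (ms : List (Move V k)) : ℕ := (ms.filter isCompute).length

/-- A sink of the DAG: a node with no outgoing edge. -/
def IsSink (E : V → V → Prop) (v : V) : Prop := ∀ u, ¬ E v u

/-- A terminal configuration: every sink carries at least one pebble. -/
def Terminal (E : V → V → Prop) (C : Conf V k) : Prop :=
  ∀ v, IsSink E v → v ∈ C.blue ∨ ∃ j, v ∈ C.red j

/-- The initial (all-empty) configuration. -/
def init (V : Type*) (k : ℕ) : Conf V k := ⟨fun _ => ∅, ∅⟩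

/-- `ms` is a pebbling strategy: a legal run from the empty configuration ending
in a terminal configuration. -/
def IsPebbling (E : V → V → Prop) (r : ℕ) (ms : List (Move V k)) : Prop :=
  ∃ Cf, Run E r (init V k) ms Cf ∧ Terminal E Cf

/-- The optimal (minimum) cost of a pebbling strategy with `k` processors,
memory bound `r` per processor, and I/O cost `g`. -/
noncomputable def optCost (E : V → V → Prop) (k r g : ℕ) : ℕ :=
  sInf {c | ∃ ms : List (Move V k), IsPebbling E r ms ∧ cost g ms = c}

/-- The minimum number of I/O moves among all minimum-cost pebbling strategies. -/
noncomputable def optIO (E : V → V → Prop) (k r g : ℕ) : ℕ :=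
  sInf {q | ∃ ms : List (Move V k),
    IsPebbling E r ms ∧ cost g ms = optCost E k r g ∧ ioCount ms = q}

/-- The maximum in-degree `Δ_in` of the DAG. -/
noncomputable def maxInDeg (E : V → V → Prop) [Fintype V] : ℕ :=
  Finset.univ.sup fun v => (Finset.univ.filter fun u => E u v).card

/-- The set of nodes computed by a move. -/
def computes : Move V k → Set V
  | .compute _ _ v => Set.range v
  | _ => ∅

/-- `x` is computed by the move at position `s` of `ms`. -/
def ComputedAt (ms : List (Move V k)) (s : ℕ) (x : V) : Prop :=
  ∃ mv, ms[s]? = some mv ∧ x ∈ computes mv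

/-- The set of nodes computed by some move strictly before position `t`. -/
def computedBefore (ms : List (Move V k)) (t : ℕ) : Set V :=
  {x | ∃ s < t, ComputedAt ms s x}

/-- `x` is ready at position `t`: it has not yet been computed, but all its
in-neighbors have been. -/
def Ready (E : V → V → Prop) (ms : List (Move V k)) (t : ℕ) (x : V) : Prop :=
  x ∉ computedBefore ms t ∧ ∀ u, E u x → u ∈ computedBefore ms t

/-- The number of nodes that are ready at position `t`. -/
noncomputable def readyCount (E : V → V → Prop) [Fintype V]
    (ms : List (Move V k)) (t : ℕ) : ℕ :=
  (Finset.univ.filter (Ready E ms t)).card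

end MPP

/-!
Take two disjoint copies of the five-node gadget `a, b, c₁ ← {a, b}, c₂ ← {c₁, a}, c₃ ← {c₂, b}`,
with `r₀ = 12` and `g = 10`.

* Two processors with 6 red pebbles each pebble one copy apiece, in 5 parallel compute moves.
* Every node of a DAG has to be computed by every pebbling strategy, and a compute move of a single
  processor computes one node, so one processor needs 10 compute moves.
* With 3 red pebbles a processor cannot pebble `c₃` of a copy in 5 compute moves: when `c₂` is
  computed, `a, c₁, c₂` fill its memory, so `b` must be recomputed afterwards. Without I/O a
  processor holds only what it computed itself, so four processors need 6 compute moves, while a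
  single I/O move already costs 10.
-/

lemma isDag_of_forall_lt {V : Type*} [Preorder V] {E : V → V → Prop}
    (h : ∀ u v, E u v → u < v) : IsDag E := by
  intro a ha
  have : Relation.TransGen (· < ·) a a := Relation.TransGen.mono h a a ha
  rw [Relation.transGen_eq_self] at this
  exact lt_irrefl a this

theorem IsDag.exists_sink_reflTransGen {V : Type*} [Finite V] {E : V → V → Prop}
    (hE : IsDag E) (x : V) : ∃ s, MPP.IsSink E s ∧ Relation.ReflTransGen E x s := by
  let R : V → V → Prop := fun y x => Relation.TransGen E x y
  have : IsTrans V R := ⟨fun _ _ _ h₁ h₂ => h₂.trans h₁⟩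
  have : Std.Irrefl R := ⟨hE⟩
  induction x using (Finite.wellFounded_of_trans_of_irrefl R).induction with
  | _ x ih =>
    by_cases hx : MPP.IsSink E x
    · exact ⟨x, hx, .refl⟩
    · obtain ⟨y, hxy⟩ := not_forall_not.mp hx
      obtain ⟨s, hs, hys⟩ := ih y (.single hxy)
      exact ⟨s, hs, .head hxy hys⟩

namespace MPP

section Counting

variable {V : Type*} {k : ℕ}

@[simp] lemma cost_cons (g : ℕ) (mv : Move V k) (ms : List (Move V k)) :
    cost g (mv :: ms) = moveCost g mv + cost g ms := by
  simp [cost]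

@[simp] lemma ioCount_cons (mv : Move V k) (ms : List (Move V k)) :
    ioCount (mv :: ms) = (if isIO mv then 1 else 0) + ioCount ms := by
  cases h : isIO mv <;> simp [ioCount, h, add_comm]

@[simp] lemma computeCount_cons (mv : Move V k) (ms : List (Move V k)) :
    computeCount (mv :: ms) = (if isCompute mv then 1 else 0) + computeCount ms := by
  cases h : isCompute mv <;> simp [computeCount, h, add_comm]

lemma cost_eq (g : ℕ) (ms : List (Move V k)) :
    cost g ms = g * ioCount ms + computeCount ms := by
  induction ms with
  | nil => rfl
  | cons mv ms ih => cases mv <;> simp [ih, moveCost, isIO, isCompute] <;> ring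

lemma ioCount_eq_zero_iff {ms : List (Move V k)} :
    ioCount ms = 0 ↔ ∀ mv ∈ ms, isIO mv = false := by
  simp [ioCount, List.filter_eq_nil_iff]

end Counting

variable {V : Type*} [DecidableEq V] {k r : ℕ} {E : V → V → Prop}

def Move.computed : Move V k → Finset V
  | .compute _ _ v => Finset.univ.image v
  | _ => ∅

def computedNodes : List (Move V k) → Finset V
  | [] => ∅
  | mv :: ms => mv.computed ∪ computedNodes ms

def Conf.pebbles (C : Conf V k) : Finset V := Finset.univ.biUnion C.red ∪ C.blue

lemma Conf.mem_pebbles {C : Conf V k} {x : V} :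
    x ∈ C.pebbles ↔ (∃ j, x ∈ C.red j) ∨ x ∈ C.blue := by
  simp [Conf.pebbles]

@[simp] lemma pebbles_init : (init V k).pebbles = ∅ := by
  ext
  simp [Conf.pebbles, init]

lemma mem_addRed {C : Conf V k} {m : ℕ} {f : Fin m → Fin k} {v : Fin m → V} {j : Fin k}
    {x : V} : x ∈ addRed C f v j ↔ x ∈ C.red j ∨ ∃ i, f i = j ∧ v i = x := by
  simp [addRed]

lemma addRed_of_forall_ne {C : Conf V k} {m : ℕ} {f : Fin m → Fin k} (v : Fin m → V)
    {j : Fin k} (h : ∀ i, f i ≠ j) : addRed C f v j = C.red j := by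
  ext x
  simp [mem_addRed, h]

lemma addRed_of_injective {C : Conf V k} {m : ℕ} {f : Fin m → Fin k} (v : Fin m → V)
    (hf : Function.Injective f) {i : Fin m} :
    addRed C f v (f i) = insert (v i) (C.red (f i)) := by
  ext x
  simp only [mem_addRed, hf.eq_iff, exists_eq_left, Finset.mem_insert]
  tauto

lemma red_apply_removeRed (C : Conf V k) (j : Fin k) (x : V) :
    (apply (.removeRed j x) C).red j = (C.red j).erase x := by
  simp [apply, Finset.sdiff_singleton_eq_erase]

lemma red_apply_removeRed_of_ne (C : Conf V k) {i j : Fin k} (x : V) (h : i ≠ j) :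
    (apply (.removeRed j x) C).red i = C.red i := by
  simp [apply, Function.update_of_ne h]

lemma pebbles_apply_subset {C : Conf V k} {mv : Move V k} (hl : Legal E C mv) :
    (apply mv C).pebbles ⊆ C.pebbles ∪ mv.computed := by
  intro x hx
  simp only [Finset.mem_union, Conf.mem_pebbles] at hx ⊢
  cases mv with
  | save m f v =>
    simp only [apply, Finset.mem_union, Finset.mem_image, Finset.mem_univ, true_and] at hx
    rcases hx with h | h | ⟨i, rfl⟩
    exacts [.inl (.inl h), .inl (.inr h), .inl (.inl ⟨_, hl.2.2 i⟩)]
  | load m f v =>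
    simp only [apply, mem_addRed] at hx
    rcases hx with ⟨j, h | ⟨i, -, rfl⟩⟩ | h
    exacts [.inl (.inl ⟨j, h⟩), .inl (.inr (hl.2.2 i)), .inl (.inr h)]
  | compute m f v =>
    simp only [apply, mem_addRed] at hx
    rcases hx with ⟨j, h | ⟨i, -, rfl⟩⟩ | h
    exacts [.inl (.inl ⟨j, h⟩), .inr (by simp [Move.computed]), .inl (.inr h)]
  | removeRed j y =>
    simp only [apply] at hx
    rcases hx with ⟨i, h⟩ | h
    · refine .inl (.inl ⟨i, ?_⟩)
      rcases eq_or_ne i j with rfl | hij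
      · simp_all
      · simpa [Function.update_of_ne hij] using h
    · exact .inl (.inr h)
  | removeBlue y =>
    simp only [apply, Finset.mem_sdiff] at hx
    tauto

lemma Run.pebbles_subset {C C' : Conf V k} {ms : List (Move V k)} (h : Run E r C ms C') :
    C'.pebbles ⊆ C.pebbles ∪ computedNodes ms := by
  induction h with
  | nil C => simp [computedNodes]
  | cons hl _ _ ih =>
    refine ih.trans (Finset.union_subset ((pebbles_apply_subset hl).trans ?_) ?_) <;>
      intro x <;> simp [computedNodes] <;> tauto

lemma Run.pred_mem_of_mem_computedNodes {C C' : Conf V k} {ms : List (Move V k)}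
    (h : Run E r C ms C') {x u : V} (hx : x ∈ computedNodes ms) (hu : E u x) :
    u ∈ C.pebbles ∪ computedNodes ms := by
  induction h with
  | nil C => simp [computedNodes] at hx
  | @cons C₀ _ mv _ hl _ _ ih =>
    simp only [computedNodes, Finset.mem_union] at hx ⊢
    rcases hx with hx | hx
    · cases mv <;> simp only [Move.computed, Finset.mem_image, Finset.notMem_empty] at hx
      obtain ⟨i, -, rfl⟩ := hx
      exact .inl (Conf.mem_pebbles.2 (.inl ⟨_, hl.2.2 i u hu⟩))
    · rcases Finset.mem_union.1 (ih hx) with h | h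
      · have := pebbles_apply_subset hl h
        simp only [Finset.mem_union] at this
        tauto
      · tauto

theorem IsPebbling.mem_computedNodes [Finite V] {ms : List (Move V k)}
    (h : IsPebbling E r ms) (hE : IsDag E) (x : V) : x ∈ computedNodes ms := by
  obtain ⟨Cf, hrun, hterm⟩ := h
  obtain ⟨s, hs, hxs⟩ := hE.exists_sink_reflTransGen x
  have hs_pebbled : s ∈ Cf.pebbles := Conf.mem_pebbles.2 (by have := hterm s hs; tauto)
  induction hxs using Relation.ReflTransGen.head_induction_on with
  | refl => simpa using hrun.pebbles_subset hs_pebbled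
  | head hxy _ ih => simpa using hrun.pred_mem_of_mem_computedNodes ih hxy

lemma Run.card_computedNodes_le {C C' : Conf V k} {ms : List (Move V k)}
    (h : Run E r C ms C') : (computedNodes ms).card ≤ k * computeCount ms := by
  induction h with
  | nil C => simp [computedNodes, computeCount]
  | @cons _ _ mv _ hl _ _ ih =>
    refine (Finset.card_union_le _ _).trans ?_
    cases mv with
    | compute m f v =>
      have : (Finset.univ.image v).card ≤ k := Finset.card_image_le.trans (by simpa using hl.1)
      simp only [Move.computed, computeCount_cons, isCompute, if_true, mul_add, mul_one]
      omega
    | _ => simpa [Move.computed, isCompute] using ih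

theorem IsPebbling.card_le_mul_cost [Fintype V] {ms : List (Move V k)}
    (h : IsPebbling E r ms) (hE : IsDag E) (g : ℕ) : Fintype.card V ≤ k * cost g ms := by
  have hall : computedNodes ms = Finset.univ :=
    Finset.eq_univ_of_forall (h.mem_computedNodes hE)
  obtain ⟨Cf, hrun, -⟩ := h
  calc Fintype.card V = (computedNodes ms).card := by rw [hall, Finset.card_univ]
    _ ≤ k * computeCount ms := hrun.card_computedNodes_le
    _ ≤ k * cost g ms := Nat.mul_le_mul_left k (by rw [cost_eq]; omega)

lemma Run.blue_subset {C C' : Conf V k} {ms : List (Move V k)} (h : Run E r C ms C')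
    (hio : ∀ mv ∈ ms, isIO mv = false) : C'.blue ⊆ C.blue := by
  induction h with
  | nil C => rfl
  | @cons _ _ mv _ _ _ _ ih =>
    refine (ih fun mv' hmv' => hio mv' (.tail _ hmv')).trans ?_
    have := hio mv (.head _)
    cases mv with
    | save | load => simp [isIO] at this
    | compute | removeRed => rfl
    | removeBlue => exact Finset.sdiff_subset

/-- Without I/O each processor plays a sequential red pebble game on its own memory. -/
theorem Run.potential_le {C C' : Conf V k} {ms : List (Move V k)} (h : Run E r C ms C')
    (hio : ∀ mv ∈ ms, isIO mv = false) (φ : Finset V → ℕ)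
    (hφ_erase : ∀ S x, φ S ≤ φ (S.erase x))
    (hφ_insert : ∀ S x, (∀ u, E u x → u ∈ S) → (insert x S).card ≤ r →
      φ S ≤ φ (insert x S) + 1) (j : Fin k) :
    φ (C.red j) ≤ computeCount ms + φ (C'.red j) := by
  induction h with
  | nil C => simp
  | @cons C₀ _ mv _ hl hv _ ih =>
    have ih := ih fun mv' hmv' => hio mv' (.tail _ hmv')
    have := hio mv (.head _)
    suffices φ (C₀.red j) ≤ (if isCompute mv then 1 else 0) + φ ((apply mv C₀).red j) by
      rw [computeCount_cons]; omega
    cases mv with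
    | save | load => simp [isIO] at this
    | compute m f v =>
      simp only [apply, isCompute, if_true]
      by_cases hj : ∃ i, f i = j
      · obtain ⟨i, rfl⟩ := hj
        have hcard := hv (f i)
        simp only [apply, addRed_of_injective v hl.2.1] at hcard ⊢
        have := hφ_insert _ _ (hl.2.2 i) hcard
        omega
      · rw [addRed_of_forall_ne v (not_exists.1 hj)]
        omega
    | removeRed j' x =>
      simp only [isCompute]
      rcases eq_or_ne j j' with rfl | hjj'
      · simpa [red_apply_removeRed] using hφ_erase _ x
      · simp [red_apply_removeRed_of_ne _ _ hjj']
    | removeBlue => simp [apply, isCompute]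

lemma optCost_le_cost {ms : List (Move V k)} (h : IsPebbling E r ms) (g : ℕ) :
    optCost E k r g ≤ cost g ms :=
  Nat.sInf_le ⟨ms, h, rfl⟩

lemma le_optCost {g c : ℕ} (hne : ∃ ms : List (Move V k), IsPebbling E r ms)
    (hlb : ∀ ms : List (Move V k), IsPebbling E r ms → c ≤ cost g ms) :
    c ≤ optCost E k r g := by
  obtain ⟨ms, hms⟩ := hne
  exact le_csInf ⟨_, ms, hms, rfl⟩ fun _ ⟨ms, hms, hc⟩ => hc ▸ hlb ms hms

section Decidable

variable [Fintype V] [DecidableRel E]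

instance (C : Conf V k) : DecidablePred (Legal E C)
  | .save .. | .load .. | .compute .. => inferInstanceAs (Decidable (_ ∧ _ ∧ _))
  | .removeRed .. | .removeBlue .. => .isTrue trivial

instance (C : Conf V k) : Decidable (Valid r C) :=
  inferInstanceAs (Decidable (∀ _, _))

instance : DecidablePred (IsSink E) :=
  fun _ => inferInstanceAs (Decidable (∀ _, _))

instance (C : Conf V k) : Decidable (Terminal E C) :=
  inferInstanceAs (Decidable (∀ _, _))

end Decidable

-- Nodes `0, …, 4` and `5, …, 9` are the two copies of `a, b, c₁, c₂, c₃`.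
def twoGadgets : Fin 10 → Fin 10 → Prop := fun u v =>
  (u, v) ∈ [(0, 2), (1, 2), (2, 3), (0, 3), (3, 4), (1, 4),
    (5, 7), (6, 7), (7, 8), (5, 8), (8, 9), (6, 9)]

instance : DecidableRel twoGadgets := fun _ _ => inferInstanceAs (Decidable (_ ∈ _))

lemma isDag_twoGadgets : IsDag twoGadgets := isDag_of_forall_lt (by decide)

/-- The least number of compute moves a single processor with 3 red pebbles, holding `S`,
still needs to pebble node `4`. -/
def remainingComputes (S : Finset (Fin 10)) : ℕ :=
  if 4 ∈ S then 0
  else if 3 ∈ S then (if 1 ∈ S then 1 else 2)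
  else if 2 ∈ S then (if 0 ∈ S then 3 else 4)
  else if 0 ∈ S then (if 1 ∈ S then 4 else 5)
  else if 1 ∈ S then 5 else 6

lemma remainingComputes_le_erase (S : Finset (Fin 10)) (x : Fin 10) :
    remainingComputes S ≤ remainingComputes (S.erase x) := by
  unfold remainingComputes
  simp only [Finset.mem_erase]
  split_ifs <;> first | omega | tauto

lemma remainingComputes_le_insert {S : Finset (Fin 10)} {x : Fin 10}
    (hpred : ∀ u, twoGadgets u x → u ∈ S) (hcard : (insert x S).card ≤ 3) :
    remainingComputes S ≤ remainingComputes (insert x S) + 1 := by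
  have hno_b : x = 3 → 1 ∉ S := by
    rintro rfl hS1
    have : ({0, 1, 2, 3} : Finset (Fin 10)) ⊆ insert 3 S := by
      simp [Finset.insert_subset_iff, hS1, hpred 0 (by decide), hpred 2 (by decide)]
    have := (Finset.card_le_card this).trans hcard
    rw [show ({0, 1, 2, 3} : Finset (Fin 10)).card = 4 by rfl] at this
    omega
  fin_cases x <;> simp_all [remainingComputes, twoGadgets] <;> split_ifs <;> omega

def twoProcStrategy : List (Move (Fin 10) 2) :=
  [.compute 2 id ![0, 5], .compute 2 id ![1, 6], .compute 2 id ![2, 7],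
   .compute 2 id ![3, 8], .compute 2 id ![4, 9]]

def oneProcStrategy : List (Move (Fin 10) 1) :=
  (List.finRange 10).map fun x => .compute 1 (fun _ => 0) ![x]

def fourProcStrategy : List (Move (Fin 10) 4) :=
  [.compute 2 ![0, 1] ![0, 5], .compute 2 ![0, 1] ![1, 6], .compute 2 ![0, 1] ![2, 7],
   .removeRed 0 1, .removeRed 1 6,
   .compute 2 ![0, 1] ![3, 8],
   .removeRed 0 0, .removeRed 0 2, .removeRed 1 5, .removeRed 1 7,
   .compute 2 ![0, 1] ![1, 6], .compute 2 ![0, 1] ![4, 9]]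

lemma isPebbling_twoProcStrategy : IsPebbling twoGadgets 6 twoProcStrategy :=
  ⟨_, by
    unfold twoProcStrategy
    repeat' first | exact .nil _ | apply Run.cons
    all_goals decide, by decide⟩

lemma isPebbling_oneProcStrategy : IsPebbling twoGadgets 12 oneProcStrategy :=
  ⟨_, by
    unfold oneProcStrategy
    repeat' first | exact .nil _ | apply Run.cons
    all_goals decide, by decide⟩

lemma isPebbling_fourProcStrategy : IsPebbling twoGadgets 3 fourProcStrategy :=
  ⟨_, by
    unfold fourProcStrategy
    repeat' first | exact .nil _ | apply Run.cons
    all_goals decide, by decide⟩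

lemma six_le_cost_of_isPebbling_twoGadgets {ms : List (Move (Fin 10) 4)}
    (h : IsPebbling twoGadgets 3 ms) : 6 ≤ cost 10 ms := by
  rw [cost_eq]
  rcases Nat.eq_zero_or_pos (ioCount ms) with hio | hio
  · obtain ⟨Cf, hrun, hterm⟩ := h
    rw [ioCount_eq_zero_iff] at hio
    have hblue : Cf.blue = ∅ := Finset.subset_empty.1 (hrun.blue_subset hio)
    obtain ⟨j, hj⟩ : ∃ j, (4 : Fin 10) ∈ Cf.red j := by
      simpa [hblue] using hterm 4 (by decide)
    have := hrun.potential_le hio remainingComputes remainingComputes_le_erase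
      (fun _ _ => remainingComputes_le_insert) j
    simp only [init, remainingComputes, hj, if_true, Finset.notMem_empty, if_false] at this
    omega
  · omega

end MPP

/-- There exist a finite DAG `G`, a memory budget `r₀ ∈ ℤ⁺`
divisible by 4, and `g ∈ ℤ⁺` such that in the fair comparison the optimal MPP
cost is non-monotonic in the number of processors:
`OPT⁽²⁾ (2 procs, memory r₀/2 each) < OPT⁽¹⁾ (1 proc, memory r₀)` and
`OPT⁽²⁾ < OPT⁽⁴⁾ (4 procs, memory r₀/4 each)`. -/
theorem stmt10 :
    ∃ (n : ℕ) (E : Fin n → Fin n → Prop) (r₀ g : ℕ),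
      IsDag E ∧ 0 < r₀ ∧ 4 ∣ r₀ ∧ 0 < g ∧
      MPP.optCost E 2 (r₀ / 2) g < MPP.optCost E 1 r₀ g ∧
      MPP.optCost E 2 (r₀ / 2) g < MPP.optCost E 4 (r₀ / 4) g := by
  open MPP in
  have hopt₂ : optCost twoGadgets 2 6 10 ≤ 5 :=
    optCost_le_cost isPebbling_twoProcStrategy 10
  have hopt₁ : 10 ≤ optCost twoGadgets 1 12 10 :=
    le_optCost ⟨_, isPebbling_oneProcStrategy⟩ fun _ h => by
      simpa using h.card_le_mul_cost isDag_twoGadgets 10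
  have hopt₄ : 6 ≤ optCost twoGadgets 4 3 10 :=
    le_optCost ⟨_, isPebbling_fourProcStrategy⟩ fun _ => six_le_cost_of_isPebbling_twoGadgets
  exact ⟨10, twoGadgets, 12, 10, isDag_twoGadgets, by norm_num, by norm_num, by norm_num,
    hopt₂.trans_lt (lt_of_lt_of_le (by norm_num) hopt₁),
    hopt₂.trans_lt (lt_of_lt_of_le (by norm_num) hopt₄)⟩
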